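/- arXiv:1301.5334 — 5 statements merged into one kernel-verified Lean document; each statement's English description precedes it below -/
import Mathlib

section
/- If f : 2^S → ℝ≥0 is submodular (f(S_1)+f(S_2) ≥ f(S_1∪S_2)+f(S_1∩S_2) for all S_1,S_2 ⊆ S), then for any subsets S_1,...,S_K of S and any nonempty U ⊆ [K], ∑_{k∈U} f(S_k) ≥ ∑_{r=1}^{|U|} f(S^{(r)}(U)), where S^{(r)}(U) = ⋃_{U'⊆U,|U'|=r} ⋂_{k∈U'} S_k. -/
/-!
Write `X_r` for `S^{(r)}(U)`. Adding a set `S_j` to the family gives the recursion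
`X'_{r+1} = X_{r+1} ∪ (S_j ∩ X_r)`, with `X_0 = univ` and `X_{|U|+1} = ∅`. Submodularity applied to
`X_{r+1}` and `S_j ∩ X_r`, whose meet is `S_j ∩ X_{r+1}` because the `X_r` decrease, gives
`f(X'_{r+1}) ≤ f(X_{r+1}) + f(S_j ∩ X_r) - f(S_j ∩ X_{r+1})`; summing over `r` telescopes to
`∑ f(X'_r) ≤ ∑ f(X_r) + f(S_j)`, and induction on `U` concludes.
-/

open Finset

/-- `cutOp S U r` is `S^{(r)}(U) = ⋃_{U' ⊆ U, |U'| = r} ⋂_{k ∈ U'} S_k`. -/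
def cutOp {α : Type*} [Fintype α] [DecidableEq α] (S : ℕ → Finset α) (U : Finset ℕ)
    (r : ℕ) : Finset α :=
  (U.powersetCard r).sup fun V => V.inf S

section Lattice

variable {ι L : Type*} [DistribLattice L] [BoundedOrder L]

def supInfPowersetCard (S : ι → L) (U : Finset ι) (r : ℕ) : L :=
  (U.powersetCard r).sup fun V => V.inf S

variable (S : ι → L) (U : Finset ι)

lemma supInfPowersetCard_zero : supInfPowersetCard S U 0 = ⊤ := by
  simp [supInfPowersetCard]

lemma supInfPowersetCard_of_card_lt {r : ℕ} (h : U.card < r) : supInfPowersetCard S U r = ⊥ := by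
  rw [supInfPowersetCard, powersetCard_eq_empty.2 h, sup_empty]

lemma supInfPowersetCard_antitone : Antitone (supInfPowersetCard S U) := by
  refine antitone_nat_of_succ_le fun r => Finset.sup_le fun V hV => ?_
  obtain ⟨hVU, hVcard⟩ := mem_powersetCard.1 hV
  obtain ⟨W, hWV, hWcard⟩ := exists_subset_card_eq (show r ≤ V.card by omega)
  exact (inf_mono hWV).trans (le_sup (mem_powersetCard.2 ⟨hWV.trans hVU, hWcard⟩))

lemma supInfPowersetCard_insert_succ [DecidableEq ι] {j : ι} (hj : j ∉ U) (r : ℕ) :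
    supInfPowersetCard S (insert j U) (r + 1) =
      supInfPowersetCard S U (r + 1) ⊔ (S j ⊓ supInfPowersetCard S U r) := by
  have inf_insert_eq (V : Finset ι) : (insert j V).inf S = S j ⊓ V.inf S := by
    by_cases h : j ∈ V
    · rw [insert_eq_of_mem h, inf_eq_right.2 (inf_le h)]
    · exact inf_insert
  simp only [supInfPowersetCard, powersetCard_succ_insert hj, sup_union, sup_image,
    Function.comp_def, inf_insert_eq, sup_inf_distrib_left]

end Lattice

section Submodular

variable {L M : Type*} [AddCommGroup M] [PartialOrder M] [IsOrderedAddMonoid M] {f : L → M}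

lemma sum_range_le_of_submodular [Lattice L]
    (hf : ∀ a b, f (a ⊔ b) + f (a ⊓ b) ≤ f a + f b) (b : L) {A : ℕ → L} (hA : Antitone A)
    (n : ℕ) :
    ∑ r ∈ range n, f (A (r + 1) ⊔ (b ⊓ A r)) + f (b ⊓ A n) ≤
      ∑ r ∈ range n, f (A (r + 1)) + f (b ⊓ A 0) := by
  have step (r : ℕ) :
      f (A (r + 1) ⊔ (b ⊓ A r)) ≤ f (A (r + 1)) - (f (b ⊓ A (r + 1)) - f (b ⊓ A r)) := by
    have hmeet : A (r + 1) ⊓ (b ⊓ A r) = b ⊓ A (r + 1) := by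
      rw [inf_left_comm, inf_eq_left.2 (hA r.le_succ)]
    rw [sub_sub_eq_add_sub, le_sub_iff_add_le, ← hmeet]
    exact hf _ _
  calc ∑ r ∈ range n, f (A (r + 1) ⊔ (b ⊓ A r)) + f (b ⊓ A n)
      ≤ ∑ r ∈ range n, (f (A (r + 1)) - (f (b ⊓ A (r + 1)) - f (b ⊓ A r))) + f (b ⊓ A n) := by
        gcongr with r; exact step r
    _ = ∑ r ∈ range n, f (A (r + 1)) + f (b ⊓ A 0) := by
        rw [sum_sub_distrib, sum_range_sub (fun r => f (b ⊓ A r))]; abel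

theorem sum_supInfPowersetCard_le [DistribLattice L] [BoundedOrder L] {ι : Type*}
    [DecidableEq ι] (hf : ∀ a b, f (a ⊔ b) + f (a ⊓ b) ≤ f a + f b) (S : ι → L) (U : Finset ι) :
    ∑ r ∈ range U.card, f (supInfPowersetCard S U (r + 1)) ≤ ∑ k ∈ U, f (S k) := by
  induction U using Finset.induction_on with
  | empty => simp
  | insert j U hj ih =>
    set X := supInfPowersetCard S U
    have hX0 : X 0 = ⊤ := supInfPowersetCard_zero S U
    have hX : X (U.card + 1) = ⊥ := supInfPowersetCard_of_card_lt S U (Nat.lt_succ_self _)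
    have telescope :=
      sum_range_le_of_submodular hf (S j) (supInfPowersetCard_antitone S U) (U.card + 1)
    calc ∑ r ∈ range (insert j U).card, f (supInfPowersetCard S (insert j U) (r + 1))
        = ∑ r ∈ range (U.card + 1), f (X (r + 1) ⊔ (S j ⊓ X r)) := by
          simp only [card_insert_of_notMem hj, supInfPowersetCard_insert_succ S U hj, X]
      _ ≤ ∑ r ∈ range (U.card + 1), f (X (r + 1)) + f (S j ⊓ X 0) - f (S j ⊓ X (U.card + 1)) :=
          le_sub_iff_add_le.2 telescope
      _ = ∑ r ∈ range U.card, f (X (r + 1)) + f (S j) := by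
          rw [sum_range_succ, hX, hX0, inf_top_eq, inf_bot_eq]; abel
      _ ≤ ∑ k ∈ insert j U, f (S k) := by
          rw [sum_insert hj, add_comm (f (S j))]; gcongr

end Submodular

lemma cutOp_eq_supInfPowersetCard {α : Type*} [Fintype α] [DecidableEq α] (S : ℕ → Finset α)
    (U : Finset ℕ) : cutOp S U = supInfPowersetCard S U :=
  rfl

theorem submodular_multiway_general {α : Type*} [Fintype α] [DecidableEq α]
    (f : Finset α → ℝ)
    (hf : ∀ A B : Finset α, f A + f B ≥ f (A ∪ B) + f (A ∩ B))
    (S : ℕ → Finset α) (U : Finset ℕ) :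
    ∑ k ∈ U, f (S k) ≥ ∑ r ∈ Finset.Icc 1 U.card, f (cutOp S U r) := by
  rw [ge_iff_le, cutOp_eq_supInfPowersetCard, ← Ico_add_one_right_eq_Icc, ← zero_add 1,
    ← sum_Ico_add', ← range_eq_Ico]
  exact sum_supInfPowersetCard_le hf S U

theorem submodular_multiway {α : Type*} [Fintype α] [DecidableEq α] (K : ℕ)
    (f : Finset α → ℝ) (hf0 : ∀ A, 0 ≤ f A)
    (hf : ∀ A B : Finset α, f A + f B ≥ f (A ∪ B) + f (A ∩ B))
    (S : ℕ → Finset α) (U : Finset ℕ) (hU : U ⊆ Finset.Icc 1 K) (hne : U.Nonempty) :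
    ∑ k ∈ U, f (S k) ≥ ∑ r ∈ Finset.Icc 1 U.card, f (cutOp S U r) :=
  submodular_multiway_general f hf S U
end

section
/- If f : 2^S → ℝ≥0 is modular (f(S_1)+f(S_2) = f(S_1∪S_2)+f(S_1∩S_2) for all S_1,S_2 ⊆ S), then for any subsets S_1,...,S_K of S and any nonempty U ⊆ [K], ∑_{k∈U} f(S_k) = ∑_{r=1}^{|U|} f(S^{(r)}(U)). -/
open Finset

/-! Induction on `U`: adding an index `j` changes `S^{(r+1)}` into `S^{(r+1)} ∪ (S_j ∩ S^{(r)})`,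
a union along the decreasing chain `S^{(r)}(U)`, and modularity turns the sum of `f` over the
new chain into the old sum plus a sum telescoping to `f(S_j) - f(∅)`. -/

theorem modular_sup_inf_of_le {β : Type*} [Lattice β] (f : β → ℝ)
    (hf : ∀ a b : β, f a + f b = f (a ⊔ b) + f (a ⊓ b)) {a b : β} (hba : b ≤ a) (c : β) :
    f (b ⊔ c ⊓ a) = f b + f (c ⊓ a) - f (c ⊓ b) := by
  have hinf : b ⊓ (c ⊓ a) = c ⊓ b := by
    rw [inf_left_comm, inf_eq_left.mpr hba, inf_comm]
  linarith [hinf ▸ hf b (c ⊓ a)]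

section cutOp

variable {α : Type*} [Fintype α] [DecidableEq α] (S : ℕ → Finset α)

theorem cutOp_zero (U : Finset ℕ) : cutOp S U 0 = univ := by
  simp [cutOp]

theorem cutOp_eq_empty_of_card_lt {U : Finset ℕ} {r : ℕ} (h : U.card < r) :
    cutOp S U r = ∅ := by
  simp [cutOp, powersetCard_eq_empty.mpr h]

theorem cutOp_succ_subset (U : Finset ℕ) (r : ℕ) : cutOp S U (r + 1) ⊆ cutOp S U r := by
  refine Finset.sup_le fun V hV => ?_
  obtain ⟨hVU, hcard⟩ := mem_powersetCard.mp hV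
  obtain ⟨W, hWV, hW⟩ := exists_subset_card_eq (s := V) (n := r) (by omega)
  exact (inf_mono hWV).trans (le_sup (mem_powersetCard.mpr ⟨hWV.trans hVU, hW⟩))

theorem cutOp_insert_succ {U : Finset ℕ} {j : ℕ} (hj : j ∉ U) (r : ℕ) :
    cutOp S (insert j U) (r + 1) = cutOp S U (r + 1) ∪ S j ∩ cutOp S U r := by
  rw [cutOp, powersetCard_succ_insert hj, sup_union, sup_image, cutOp, cutOp,
    ← inf_eq_inter, sup_inf_distrib_left]
  congr 1
  exact sup_congr rfl fun V _ => inf_insert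

theorem sum_cutOp_insert (f : Finset α → ℝ)
    (hf : ∀ A B : Finset α, f A + f B = f (A ∪ B) + f (A ∩ B))
    {U : Finset ℕ} {j : ℕ} (hj : j ∉ U) (m : ℕ) :
    ∑ r ∈ Icc 1 m, f (cutOp S (insert j U) r)
      = ∑ r ∈ Icc 1 m, f (cutOp S U r) + f (S j) - f (S j ∩ cutOp S U m) := by
  induction m with
  | zero => simp [cutOp_zero]
  | succ m ih =>
    rw [sum_Icc_succ_top (by omega), sum_Icc_succ_top (by omega), ih,
      cutOp_insert_succ S hj]
    have hstep := modular_sup_inf_of_le f hf (cutOp_succ_subset S U m) (S j)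
    simp only [sup_eq_union, inf_eq_inter] at hstep
    linarith

theorem sum_modular_eq_sum_cutOp (f : Finset α → ℝ)
    (hf : ∀ A B : Finset α, f A + f B = f (A ∪ B) + f (A ∩ B)) (U : Finset ℕ) :
    ∑ k ∈ U, f (S k) = ∑ r ∈ Icc 1 U.card, f (cutOp S U r) := by
  induction U using Finset.induction_on with
  | empty => simp
  | @insert j U hj ih =>
    have hempty : cutOp S U (U.card + 1) = ∅ := cutOp_eq_empty_of_card_lt S (by omega)
    rw [sum_insert hj, ih, card_insert_of_notMem hj, sum_cutOp_insert S f hf hj,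
      sum_Icc_succ_top (by omega), hempty, inter_empty]
    ring

end cutOp

theorem modular_multiway_general {α : Type*} [Fintype α] [DecidableEq α]
    (f : Finset α → ℝ)
    (hf : ∀ A B : Finset α, f A + f B = f (A ∪ B) + f (A ∩ B))
    (S : ℕ → Finset α) (U : Finset ℕ) :
    ∑ k ∈ U, f (S k) = ∑ r ∈ Finset.Icc 1 U.card, f (cutOp S U r) :=
  sum_modular_eq_sum_cutOp S f hf U

theorem modular_multiway {α : Type*} [Fintype α] [DecidableEq α] (K : ℕ)
    (f : Finset α → ℝ) (hf0 : ∀ A, 0 ≤ f A)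
    (hf : ∀ A B : Finset α, f A + f B = f (A ∪ B) + f (A ∩ B))
    (S : ℕ → Finset α) (U : Finset ℕ) (hU : U ⊆ Finset.Icc 1 K) (hne : U.Nonempty) :
    ∑ k ∈ U, f (S k) = ∑ r ∈ Finset.Icc 1 U.card, f (cutOp S U r) :=
  modular_multiway_general f hf S U
end

section
/- Let f : 2^S → ℝ≥0 be modular and let S_1,...,S_K ⊆ S. For integers 0 ≤ r' ≤ J ≤ K, equality holds: ∑_{r=1}^{r'} f(S_r) + ∑_{r=r'+1}^{J} f(S_r ∪ S^{(r'+1)}([r])) = ∑_{r=1}^{r'} f(S^{(r)}([J])) + ∑_{r=r'+1}^{J} f(S^{(r'+1)}([r])). -/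
/-!
A modular set function is affine in the indicator vector: `f A = f ∅ + ∑_{a ∈ A} (f {a} - f ∅)`.
Both sides of the identity are sums of `J` values of `f`, so it suffices to check, element by
element, that `a` lies in equally many of the sets on the two sides. With `c r` the number of
`k ≤ r` such that `a ∈ S k`, one has `a ∈ S^{(k)}([r]) ↔ k ≤ c r`, and the count identity follows
by induction on `J ≥ r'`.
-/

open Finset

theorem mem_cutOp {α : Type*} [Fintype α] [DecidableEq α] {S : ℕ → Finset α} {U : Finset ℕ}
    {r : ℕ} {a : α} : a ∈ cutOp S U r ↔ r ≤ #{k ∈ U | a ∈ S k} := by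
  simp only [cutOp, mem_sup, mem_powersetCard, mem_inf]
  constructor
  · rintro ⟨V, ⟨hVU, rfl⟩, haV⟩
    exact card_le_card fun k hk => mem_filter.2 ⟨hVU hk, haV k hk⟩
  · intro hr
    obtain ⟨V, hV, rfl⟩ := exists_subset_card_eq hr
    exact ⟨V, ⟨hV.trans (filter_subset _ _), rfl⟩, fun k hk => (mem_filter.1 (hV hk)).2⟩

section Modular

variable {α G : Type*} [DecidableEq α] [AddCommGroup G] {f : Finset α → G}

theorem eq_add_sum_of_modular (hf : ∀ A B, f A + f B = f (A ∪ B) + f (A ∩ B)) (A : Finset α) :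
    f A = f ∅ + ∑ a ∈ A, (f {a} - f ∅) := by
  induction A using Finset.induction_on with
  | empty => simp
  | insert a A ha ih =>
    have h := hf {a} A
    rw [← insert_eq, singleton_inter_of_notMem ha] at h
    rw [sum_insert ha, eq_sub_of_add_eq h.symm, ih]
    abel

theorem sum_eq_of_modular [Fintype α] (hf : ∀ A B, f A + f B = f (A ∪ B) + f (A ∩ B))
    {ι : Type*} (I : Finset ι) (A : ι → Finset α) :
    ∑ i ∈ I, f (A i) = #I • f ∅ + ∑ a, #{i ∈ I | a ∈ A i} • (f {a} - f ∅) := by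
  simp_rw [eq_add_sum_of_modular hf (A _), sum_add_distrib, sum_const, ← sum_const]
  congr 1
  exact sum_comm' (by simp)

end Modular

section Count

variable (P : ℕ → Prop) [DecidablePred P]

theorem card_filter_Icc_add_one_right {a b : ℕ} (h : a ≤ b + 1) :
    #{r ∈ Icc a (b + 1) | P r} = #{r ∈ Icc a b | P r} + if P (b + 1) then 1 else 0 := by
  rw [← insert_Icc_right_eq_Icc_add_one h, filter_insert]
  split_ifs
  · exact card_insert_of_notMem (by simp)
  · rfl

theorem card_filter_Icc_one_le (n : ℕ) : #{r ∈ Icc 1 n | P r} ≤ n :=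
  (card_filter_le _ _).trans (by simp)

theorem card_filter_Icc_one_le_eq_min (m n : ℕ) : #{r ∈ Icc 1 m | r ≤ n} = min m n := by
  rw [show {r ∈ Icc 1 m | r ≤ n} = Icc 1 (min m n) by ext; simp; omega]
  simp

theorem card_filter_Icc_add_card_filter_Icc {r' J : ℕ} (h : r' ≤ J) :
    #{r ∈ Icc 1 r' | P r} + #{r ∈ Icc (r' + 1) J | P r ∨ r' + 1 ≤ #{k ∈ Icc 1 r | P k}}
      = min r' #{k ∈ Icc 1 J | P k} + #{r ∈ Icc (r' + 1) J | r' + 1 ≤ #{k ∈ Icc 1 r | P k}} := by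
  induction J, h using Nat.le_induction with
  | base =>
    simp [min_eq_right (card_filter_Icc_one_le P r')]
  | succ J hJ ih =>
    have hc := card_filter_Icc_add_one_right P (a := 1) (b := J) (by omega)
    rw [card_filter_Icc_add_one_right (fun r => P r ∨ r' + 1 ≤ #{k ∈ Icc 1 r | P k}) (by omega),
      card_filter_Icc_add_one_right (fun r => r' + 1 ≤ #{k ∈ Icc 1 r | P k}) (by omega)]
    rw [hc]
    by_cases hP : P (J + 1) <;> simp only [hP, if_true, if_false, true_or, false_or, add_zero] <;> split_ifs <;> omega

end Count

theorem lemma1_modular_general {α : Type*} [Fintype α] [DecidableEq α]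
    (f : Finset α → ℝ)
    (hf : ∀ A B : Finset α, f A + f B = f (A ∪ B) + f (A ∩ B))
    (S : ℕ → Finset α) (r' J : ℕ) (h1 : r' ≤ J) :
    ∑ r ∈ Finset.Icc 1 r', f (S r)
      + ∑ r ∈ Finset.Icc (r' + 1) J, f (S r ∪ cutOp S (Finset.Icc 1 r) (r' + 1))
    = ∑ r ∈ Finset.Icc 1 r', f (cutOp S (Finset.Icc 1 J) r)
      + ∑ r ∈ Finset.Icc (r' + 1) J, f (cutOp S (Finset.Icc 1 r) (r' + 1)) := by
  have hcount : ∀ a : α,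
      #{r ∈ Icc 1 r' | a ∈ S r} + #{r ∈ Icc (r' + 1) J | a ∈ S r ∪ cutOp S (Icc 1 r) (r' + 1)}
        = #{r ∈ Icc 1 r' | a ∈ cutOp S (Icc 1 J) r}
          + #{r ∈ Icc (r' + 1) J | a ∈ cutOp S (Icc 1 r) (r' + 1)} := by
    intro a
    simp only [mem_union, mem_cutOp]
    rw [card_filter_Icc_one_le_eq_min]
    exact card_filter_Icc_add_card_filter_Icc (a ∈ S ·) h1
  simp only [sum_eq_of_modular hf]
  have hweighted := congrArg (∑ a, · a • (f {a} - f ∅)) (funext hcount)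
  simp only [add_smul, sum_add_distrib] at hweighted
  linarith

theorem lemma1_modular {α : Type*} [Fintype α] [DecidableEq α] (K : ℕ)
    (f : Finset α → ℝ) (hf0 : ∀ A, 0 ≤ f A)
    (hf : ∀ A B : Finset α, f A + f B = f (A ∪ B) + f (A ∩ B))
    (S : ℕ → Finset α) (r' J : ℕ) (h1 : r' ≤ J) (h2 : J ≤ K) :
    ∑ r ∈ Finset.Icc 1 r', f (S r)
      + ∑ r ∈ Finset.Icc (r' + 1) J, f (S r ∪ cutOp S (Finset.Icc 1 r) (r' + 1))
    = ∑ r ∈ Finset.Icc 1 r', f (cutOp S (Finset.Icc 1 J) r)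
      + ∑ r ∈ Finset.Icc (r' + 1) J, f (cutOp S (Finset.Icc 1 r) (r' + 1)) :=
  lemma1_modular_general f hf S r' J h1
end

section
/- Let f : 2^S → ℝ≥0 be submodular, and let S_1,...,S_K ⊆ S. Let U and T = {t_1 < t_2 < ⋯ < t_{|T|}} be nonempty subsets of [K], and let q ∈ [|U|], r_q ∈ [|T|] be integers such that S^{(q)}(U) ⊆ S^{(r_q)}(T). Then ∑_{r=1}^{|T|} f(S_{t_r}) + r_q · f(S^{(q)}(U)) ≥ ∑_{r=1}^{r_q} ( f(S^{(r)}(T)) + f(S_{t_r} ∩ S^{(q)}(U)) ) + ∑_{r=r_q+1}^{|T|} f( S_{t_r} ∩ ( S^{(q)}(U) ∪ S^{(r_q+1)}({t_1,...,t_r}) ) ). -/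
open Finset

def IsSubmodular {β : Type*} [Lattice β] (f : β → ℝ) : Prop :=
  ∀ a b, f (a ⊔ b) + f (a ⊓ b) ≤ f a + f b

theorem IsSubmodular.sum_chain_le {β : Type*} [Lattice β] {f : β → ℝ} (hf : IsSubmodular f)
    {x : β} {H H' : ℕ → β} (hH : Antitone H) (hH' : ∀ r, H' (r + 1) = H (r + 1) ⊔ (x ⊓ H r))
    (n : ℕ) :
    ∑ r ∈ Icc 1 n, f (H' r) + f (x ⊓ H n) ≤ ∑ r ∈ Icc 1 n, f (H r) + f (x ⊓ H 0) := by
  induction n with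
  | zero => simp
  | succ n ih =>
    have step := hf (H (n + 1)) (x ⊓ H n)
    rw [← hH' n, inf_left_comm, inf_eq_left.2 (hH n.le_succ)] at step
    rw [sum_Icc_succ_top (by omega), sum_Icc_succ_top (by omega)]
    linarith

section ImageIcc

variable {β : Type*} [DecidableEq β] (t : ℕ → β)

theorem image_Icc_add_one (m : ℕ) :
    (Icc 1 (m + 1)).image t = insert (t (m + 1)) ((Icc 1 m).image t) := by
  rw [← insert_Icc_right_eq_Icc_add_one (by omega), image_insert]

theorem card_image_Icc_le (m : ℕ) : ((Icc 1 m).image t).card ≤ m :=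
  card_image_le.trans (by simp)

theorem notMem_image_Icc {t : ℕ → β} {m : ℕ} (ht : Set.InjOn t (Set.Icc 1 (m + 1))) :
    t (m + 1) ∉ (Icc 1 m).image t := by
  simp only [mem_image, mem_Icc, not_exists, not_and]
  intro r hr heq
  have := ht (by simp only [Set.mem_Icc]; omega) (by simp) heq
  omega

end ImageIcc

section cutOp

variable {α : Type*} [Fintype α] [DecidableEq α] (S : ℕ → Finset α)

theorem mem_cutOp_s8 {U : Finset ℕ} {r : ℕ} {x : α} :
    x ∈ cutOp S U r ↔ ∃ W ⊆ U, W.card = r ∧ x ∈ W.inf S := by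
  simp [cutOp, mem_sup, mem_powersetCard, and_assoc]

theorem cutOp_antitone (U : Finset ℕ) : Antitone (cutOp S U) := by
  intro r s hrs x hx
  obtain ⟨W, hWU, rfl, hxW⟩ := (mem_cutOp_s8 S).1 hx
  obtain ⟨W', hW'W, hW'r⟩ := exists_subset_card_eq hrs
  exact (mem_cutOp_s8 S).2 ⟨W', hW'W.trans hWU, hW'r, (inf_mono hW'W : W.inf S ⊆ W'.inf S) hxW⟩

theorem cutOp_insert {U : Finset ℕ} {a : ℕ} (ha : a ∉ U) (r : ℕ) :
    cutOp S (insert a U) (r + 1) = cutOp S U (r + 1) ∪ (S a ∩ cutOp S U r) := by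
  rw [cutOp, cutOp, cutOp, powersetCard_succ_insert ha, sup_union, sup_image, ← inf_eq_inter,
    sup_inf_distrib_left]
  congr 2
  ext W
  simp [inf_insert]

theorem inter_cutOp_insert_add_one {U : Finset ℕ} {a : ℕ} (ha : a ∉ U) (r : ℕ) :
    S a ∩ cutOp S (insert a U) (r + 1) = S a ∩ cutOp S U r := by
  rw [cutOp_insert S ha, inter_union_distrib_left, ← inter_assoc, inter_self,
    union_eq_right.2 (inter_subset_inter_left (cutOp_antitone S U r.le_succ))]

end cutOp

section Submodular

variable {α : Type*} [Fintype α] [DecidableEq α] {f : Finset α → ℝ} (S : ℕ → Finset α)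
  (A : Finset α)

theorem IsSubmodular.sum_union_cutOp_insert_le (hf : IsSubmodular f) {P : Finset ℕ} {a : ℕ}
    (ha : a ∉ P) (n : ℕ) :
    ∑ r ∈ Icc 1 n, f (A ∪ cutOp S (insert a P) r) + f (S a ∩ (A ∪ cutOp S (insert a P) (n + 1)))
      ≤ ∑ r ∈ Icc 1 n, f (A ∪ cutOp S P r) + f (S a) := by
  have hchain := hf.sum_chain_le (x := S a) (H := fun r => A ∪ cutOp S P r)
    (H' := fun r => A ∪ cutOp S (insert a P) r)
    (fun r s h => union_subset_union_right (cutOp_antitone S P h)) ?_ n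
  · have h0 : S a ∩ (A ∪ cutOp S P 0) = S a := by
      rw [cutOp_zero, inter_eq_left]
      exact (subset_univ _).trans subset_union_right
    have hn : S a ∩ (A ∪ cutOp S P n) = S a ∩ (A ∪ cutOp S (insert a P) (n + 1)) := by
      rw [inter_union_distrib_left, inter_union_distrib_left, inter_cutOp_insert_add_one S ha]
    simpa only [inf_eq_inter, h0, hn] using hchain
  · intro r
    simp only [cutOp_insert S ha, sup_eq_union, inf_eq_inter]
    ext x
    simp only [mem_union, mem_inter]
    tauto

theorem IsSubmodular.sum_cutOp_image_Icc_le (hf : IsSubmodular f) {t : ℕ → ℕ} {m : ℕ}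
    (ht : Set.InjOn t (Set.Icc 1 m)) :
    ∑ r ∈ Icc 1 m, (f (A ∪ cutOp S ((Icc 1 m).image t) r) + f (S (t r) ∩ A))
      ≤ ∑ r ∈ Icc 1 m, f (S (t r)) + m * f A := by
  induction m with
  | zero => simp
  | succ m ih =>
    have step := hf.sum_union_cutOp_insert_le S A (notMem_image_Icc ht) (m + 1)
    have hA : ∀ k, A ∪ cutOp S ((Icc 1 k).image t) (k + 1) = A := fun k => by
      rw [cutOp_eq_empty_of_card_lt S ((card_image_Icc_le t k).trans_lt k.lt_succ_self),
        union_empty]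
    rw [← image_Icc_add_one, hA (m + 1),
      sum_Icc_succ_top (by omega) (fun r => f (A ∪ cutOp S ((Icc 1 m).image t) r)), hA m] at step
    have prev := ih (ht.mono (Set.Icc_subset_Icc_right (by omega)))
    rw [sum_add_distrib] at prev ⊢
    rw [sum_Icc_succ_top (by omega) (fun r => f (S (t r) ∩ A)),
      sum_Icc_succ_top (by omega) (fun r => f (S (t r)))]
    push_cast
    linarith

theorem IsSubmodular.sum_cutOp_image_Icc_le_of_le (hf : IsSubmodular f) {t : ℕ → ℕ}
    {n m : ℕ} (hnm : n ≤ m) (ht : Set.InjOn t (Set.Icc 1 m)) :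
    ∑ r ∈ Icc 1 n, (f (A ∪ cutOp S ((Icc 1 m).image t) r) + f (S (t r) ∩ A))
      + ∑ r ∈ Icc (n + 1) m, f (S (t r) ∩ (A ∪ cutOp S ((Icc 1 r).image t) (n + 1)))
      ≤ ∑ r ∈ Icc 1 m, f (S (t r)) + n * f A := by
  induction m, hnm using Nat.le_induction with
  | base => simpa using hf.sum_cutOp_image_Icc_le S A ht
  | succ m hnm ih =>
    have step := hf.sum_union_cutOp_insert_le S A (notMem_image_Icc ht) n
    rw [← image_Icc_add_one] at step
    have prev := ih (ht.mono (Set.Icc_subset_Icc_right (by omega)))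
    rw [sum_add_distrib] at prev ⊢
    rw [sum_Icc_succ_top (by omega : n + 1 ≤ m + 1), sum_Icc_succ_top (by omega : 1 ≤ m + 1)]
    linarith

end Submodular

theorem lemma2_submodular_general {α : Type*} [Fintype α] [DecidableEq α]
    (f : Finset α → ℝ)
    (hf : ∀ A B : Finset α, f A + f B ≥ f (A ∪ B) + f (A ∩ B))
    (S : ℕ → Finset α) (U T : Finset ℕ)
    (t : ℕ → ℕ) (ht : StrictMonoOn t (Set.Icc 1 T.card))
    (himg : (Finset.Icc 1 T.card).image t = T)
    (q rq : ℕ) (hrq2 : rq ≤ T.card)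
    (hsub : cutOp S U q ⊆ cutOp S T rq) :
    ∑ r ∈ Finset.Icc 1 T.card, f (S (t r)) + (rq : ℝ) * f (cutOp S U q)
    ≥ ∑ r ∈ Finset.Icc 1 rq, (f (cutOp S T r) + f (S (t r) ∩ cutOp S U q))
      + ∑ r ∈ Finset.Icc (rq + 1) T.card,
          f (S (t r) ∩ (cutOp S U q ∪ cutOp S ((Finset.Icc 1 r).image t) (rq + 1))) := by
  have hsubmod : IsSubmodular f := fun A B => hf A B
  have key := hsubmod.sum_cutOp_image_Icc_le_of_le S (cutOp S U q) hrq2 ht.injOn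
  have hcut : ∀ r ∈ Icc 1 rq, cutOp S U q ∪ cutOp S T r = cutOp S T r := fun r hr =>
    union_eq_right.2 (hsub.trans (cutOp_antitone S T (mem_Icc.1 hr).2))
  rwa [himg, sum_congr rfl fun r hr => by rw [hcut r hr]] at key

theorem lemma2_submodular {α : Type*} [Fintype α] [DecidableEq α] (K : ℕ)
    (f : Finset α → ℝ) (hf0 : ∀ A, 0 ≤ f A)
    (hf : ∀ A B : Finset α, f A + f B ≥ f (A ∪ B) + f (A ∩ B))
    (S : ℕ → Finset α) (U T : Finset ℕ)
    (hU : U ⊆ Finset.Icc 1 K) (hT : T ⊆ Finset.Icc 1 K)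
    (hUne : U.Nonempty) (hTne : T.Nonempty)
    (t : ℕ → ℕ) (ht : StrictMonoOn t (Set.Icc 1 T.card))
    (himg : (Finset.Icc 1 T.card).image t = T)
    (q rq : ℕ) (hq1 : 1 ≤ q) (hq2 : q ≤ U.card) (hrq1 : 1 ≤ rq) (hrq2 : rq ≤ T.card)
    (hsub : cutOp S U q ⊆ cutOp S T rq) :
    ∑ r ∈ Finset.Icc 1 T.card, f (S (t r)) + (rq : ℝ) * f (cutOp S U q)
    ≥ ∑ r ∈ Finset.Icc 1 rq, (f (cutOp S T r) + f (S (t r) ∩ cutOp S U q))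
      + ∑ r ∈ Finset.Icc (rq + 1) T.card,
          f (S (t r) ∩ (cutOp S U q ∪ cutOp S ((Finset.Icc 1 r).image t) (rq + 1))) :=
  lemma2_submodular_general f hf S U T t ht himg q rq hrq2 hsub
end

section
/- Let U = {u_1 < u_2 < ⋯ < u_r} ⊆ [J] with r ≥ r'+1, and let T_1 ⊆ T_2 ⊆ ⋯ ⊆ T_J be a nested family with T_{u_r} ⊇ ⋂_{l=1}^{r'+1} S_{u_l} and ⋂_{l=1}^{r'+1} S_{u_l} ⊆ T_{u_{r'+2}} (when r ≥ r'+2). Setting G_k := S_k ∪ T_k, one has ⋂_{k∈U} G_k = ⋃_{m=1}^{min{r,r'+2}} ( (⋂_{l=1}^{m−1} S_{u_l}) ∩ T_{u_m} ), where the intersection over an empty index range is the whole ground set. -/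
open Finset

theorem inter_G_decomp {α : Type*} [Fintype α] [DecidableEq α] (S T : ℕ → Finset α)
    (r' J : ℕ) (h0 : 0 < r') (h1 : r' < J)
    (hTmono : ∀ a b, 1 ≤ a → a ≤ b → b ≤ J → T a ⊆ T b)
    (r : ℕ) (hr : r' + 1 ≤ r)
    (u : ℕ → ℕ) (hu : StrictMonoOn u (Set.Icc 1 r))
    (huJ : ∀ l ∈ Finset.Icc 1 r, u l ∈ Finset.Icc 1 J)
    (hcap1 : (Finset.Icc 1 (r' + 1)).inf (fun l => S (u l)) ⊆ T (u r))
    (hcap2 : r' + 2 ≤ r →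
        (Finset.Icc 1 (r' + 1)).inf (fun l => S (u l)) ⊆ T (u (r' + 2)))
    (G : ℕ → Finset α) (hG : ∀ k, G k = S k ∪ T k) :
    ((Finset.Icc 1 r).image u).inf G
      = (Finset.Icc 1 (min r (r' + 2))).sup
          (fun m => (Finset.Icc 1 (m - 1)).inf (fun l => S (u l)) ∩ T (u m)) := by
  have hmin : min r (r' + 2) ≤ r := min_le_left _ _
  ext x
  rw [Finset.inf_image]
  simp only [Finset.mem_inf, Finset.mem_sup, Finset.mem_Icc, Finset.mem_inter, hG,
    Finset.mem_union, Function.comp]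
  constructor
  · intro h
    by_cases hM : ∃ m, (1 ≤ m ∧ m ≤ r) ∧ x ∈ T (u m)
    · classical
      set m0 := Nat.find hM with hm0def
      obtain ⟨⟨hm01, hm0r⟩, hm0T⟩ := Nat.find_spec hM
      have hS : ∀ l, 1 ≤ l → l < m0 → x ∈ S (u l) := by
        intro l hl1 hlm0
        have hlr : l ≤ r := le_trans (Nat.le_of_lt hlm0) hm0r
        rcases h l ⟨hl1, hlr⟩ with hs | ht
        · exact hs
        · exact absurd ⟨⟨hl1, hlr⟩, ht⟩ (Nat.find_min hM hlm0)
      by_cases hcase : m0 ≤ r' + 2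
      · exact ⟨m0, ⟨hm01, le_min hm0r hcase⟩,
          fun l ⟨hl1, hl2⟩ => hS l hl1 (by omega), hm0T⟩
      · have hr2 : r' + 2 ≤ r := by omega
        have hx : x ∈ (Finset.Icc 1 (r' + 1)).inf (fun l => S (u l)) := by
          refine Finset.mem_inf.mpr ?_
          intro l hl
          rw [Finset.mem_Icc] at hl
          exact hS l hl.1 (by omega)
        exact ⟨r' + 2, ⟨by omega, le_min hr2 le_rfl⟩,
          fun l ⟨hl1, hl2⟩ => hS l hl1 (by omega), hcap2 hr2 hx⟩
    · exfalso
      have hallS : ∀ l, 1 ≤ l → l ≤ r → x ∈ S (u l) := by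
        intro l hl1 hlr
        rcases h l ⟨hl1, hlr⟩ with hs | ht
        · exact hs
        · exact absurd ⟨⟨hl1, hlr⟩, ht⟩ (not_exists.mp hM l)
      have hx : x ∈ (Finset.Icc 1 (r' + 1)).inf (fun l => S (u l)) := by
        refine Finset.mem_inf.mpr ?_
        intro l hl
        rw [Finset.mem_Icc] at hl
        exact hallS l hl.1 (by omega)
      exact hM ⟨r, ⟨by omega, le_rfl⟩, hcap1 hx⟩
  · rintro ⟨m, ⟨hm1, hmmin⟩, hSl, hT⟩
    have hmr : m ≤ r := le_trans hmmin hmin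
    intro l ⟨hl1, hlr⟩
    by_cases hlm : l ≤ m - 1
    · left
      exact hSl l ⟨hl1, hlm⟩
    · right
      have hml : m ≤ l := by omega
      have huml : u m ≤ u l :=
        hu.monotoneOn ⟨hm1, hmr⟩ ⟨hl1, hlr⟩ hml
      have h1 : u m ∈ Finset.Icc 1 J := huJ m (Finset.mem_Icc.mpr ⟨hm1, hmr⟩)
      have h2 : u l ∈ Finset.Icc 1 J := huJ l (Finset.mem_Icc.mpr ⟨hl1, hlr⟩)
      rw [Finset.mem_Icc] at h1 h2
      exact hTmono (u m) (u l) h1.1 huml h2.2 hT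
end
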